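/- For all integers d ≥ 1, ℓ ≥ 1 and n ≥ 1, b_{d,ℓ}(n) equals the number of lattice paths of total horizontal length n that start at (0,0) and end on the x-axis, use only the steps U_i = (1,1) for 1 ≤ i ≤ d (up-steps labeled by i), D = (1,−1), and H_ℓ = (ℓ,0), remain weakly above the x-axis, and contain no up-step immediately followed by a down-step. -/

import Mathlib

namespace MultiOp

mutual
inductive Atom (d : ℕ) : Type where
  | star : Atom d
  | op : Fin d → Mon d → Atom d
inductive Mon (d : ℕ) : Type where
  | single : Atom d → Mon d
  | cons : Atom d → Mon d → Mon d
end

mutual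
def Atom.deg {d : ℕ} : Atom d → ℕ
  | .star => 1
  | .op _ v => v.deg
def Mon.deg {d : ℕ} : Mon d → ℕ
  | .single a => a.deg
  | .cons a v => a.deg + v.deg
end

mutual
def Atom.mult {d : ℕ} : Atom d → Fin d → ℕ
  | .star, _ => 0
  | .op i v, j => (if i = j then 1 else 0) + v.mult j
def Mon.mult {d : ℕ} : Mon d → Fin d → ℕ
  | .single a, j => a.mult j
  | .cons a v, j => a.mult j + v.mult j
end

noncomputable def a (d r : ℕ) (s : Fin d → ℕ) : ℕ :=
  Nat.card {v : Mon d // v.deg = r ∧ v.mult = s}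

noncomputable def b (d ℓ n : ℕ) : ℕ :=
  Nat.card {v : Mon d // ℓ * v.deg + 2 * (∑ i, v.mult i) = n}

noncomputable def A (d : ℕ) : MvPowerSeries (Option (Fin d)) ℚ :=
  fun e => (a d (e none) (fun i => e (some i)) : ℚ)

noncomputable def B (d ℓ : ℕ) : PowerSeries ℚ :=
  PowerSeries.mk fun n => (b d ℓ n : ℚ)

def narayana (n k : ℕ) : ℚ := (n.choose k * n.choose (k + 1) : ℚ) / n

/-- Steps of a lattice path: up-steps `(1,1)` labeled by `i ∈ {1,…,d}`,
down-steps `(1,−1)`, and horizontal steps `(ℓ,0)`. -/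
inductive Step (d : ℕ) : Type where
  | up : Fin d → Step d
  | down : Step d
  | flat : Step d
  deriving DecidableEq

/-- Horizontal length of a step, where horizontal steps have length `ℓ`. -/
def Step.hlen {d : ℕ} (ℓ : ℕ) : Step d → ℕ
  | .up _ => 1
  | .down => 1
  | .flat => ℓ

/-- Vertical rise of a step. -/
def Step.rise {d : ℕ} : Step d → ℤ
  | .up _ => 1
  | .down => -1
  | .flat => 0

/-- A path counted by `b_{d,ℓ}(n)`: total horizontal length `n`, starts at the origin and
ends on the x-axis, stays weakly above the x-axis, and never has an up-step immediately
followed by a down-step. -/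
def IsGoodPath (d ℓ n : ℕ) (p : List (Step d)) : Prop :=
  (p.map (Step.hlen ℓ)).sum = n ∧
  (p.map Step.rise).sum = 0 ∧
  (∀ q : List (Step d), q <+: p → 0 ≤ (q.map Step.rise).sum) ∧
  p.Chain' (fun x y => (∃ i, x = Step.up i) → y ≠ Step.down)

/-! ### Auxiliary development: encoding monomials as paths -/

mutual
def Atom.enc {d : ℕ} : Atom d → List (Step d)
  | .star => [.flat]
  | .op i v => .up i :: (v.enc ++ [.down])
def Mon.enc {d : ℕ} : Mon d → List (Step d)
  | .single a => a.enc
  | .cons a v => a.enc ++ v.enc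
end

lemma prefix_append_cases {α : Type*} {r l₁ l₂ : List α} (h : r <+: l₁ ++ l₂) :
    r <+: l₁ ∨ ∃ t, r = l₁ ++ t ∧ t <+: l₂ := by
  obtain ⟨s, hs⟩ := h
  rcases List.append_eq_append_iff.mp hs with ⟨a', h1, _⟩ | ⟨c', h1, h2⟩
  · exact Or.inl ⟨a', h1.symm⟩
  · exact Or.inr ⟨c', h1, ⟨s, h2.symm⟩⟩

lemma prefix_cons_cases {α : Type*} {q : List α} {x : α} {l : List α} (h : q <+: x :: l) :
    q = [] ∨ ∃ q', q = x :: q' ∧ q' <+: l := by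
  cases q with
  | nil => exact Or.inl rfl
  | cons y q' =>
    obtain ⟨t, ht⟩ := h
    simp only [List.cons_append, List.cons.injEq] at ht
    exact Or.inr ⟨q', by rw [ht.1], ⟨t, ht.2⟩⟩

lemma Atom.enc_head {d : ℕ} (a : Atom d) :
    ∃ x t, a.enc = x :: t ∧ x ≠ Step.down := by
  cases a with
  | star => exact ⟨.flat, [], rfl, by simp⟩
  | op i v => exact ⟨.up i, _, rfl, by simp⟩

lemma Mon.enc_head {d : ℕ} (v : Mon d) :
    ∃ x t, v.enc = x :: t ∧ x ≠ Step.down := by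
  cases v with
  | single a => exact a.enc_head
  | cons a w =>
    obtain ⟨x, t, hx, hne⟩ := a.enc_head
    exact ⟨x, t ++ w.enc, by simp [Mon.enc, hx], hne⟩

lemma Mon.enc_ne_nil {d : ℕ} (v : Mon d) : v.enc ≠ [] := by
  obtain ⟨x, t, hx, _⟩ := v.enc_head
  simp [hx]

mutual
lemma Atom.enc_lastNotUp {d : ℕ} (a : Atom d) (i : Fin d) :
    Step.up i ∉ a.enc.getLast? := by
  cases a with
  | star => simp [Atom.enc]
  | op j v =>
    have : (Atom.op j v).enc = (Step.up j :: v.enc) ++ [Step.down] := by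
      simp [Atom.enc]
    rw [this, List.getLast?_concat]
    simp
lemma Mon.enc_lastNotUp {d : ℕ} (v : Mon d) (i : Fin d) :
    Step.up i ∉ v.enc.getLast? := by
  cases v with
  | single a => exact a.enc_lastNotUp i
  | cons a w =>
    have h := w.enc_lastNotUp i
    rw [Mon.enc, List.getLast?_append]
    cases hw : w.enc.getLast? with
    | none => exact absurd (List.getLast?_eq_none_iff.mp hw) w.enc_ne_nil
    | some x => rw [hw] at h; simpa [hw] using h
end

mutual
lemma Atom.enc_hlen {d : ℕ} (ℓ : ℕ) (a : Atom d) :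
    (a.enc.map (Step.hlen ℓ)).sum = ℓ * a.deg + 2 * (∑ i, a.mult i) := by
  cases a with
  | star => simp [Atom.enc, Step.hlen, Atom.deg, Atom.mult]
  | op i v =>
    have IH := Mon.enc_hlen ℓ v
    have hsum : (∑ j, (Atom.op i v).mult j) = 1 + ∑ j, v.mult j := by
      simp [Atom.mult, Finset.sum_add_distrib]
    simp only [Atom.enc, List.map_cons, List.map_append, List.sum_cons, List.sum_append,
      Atom.deg, hsum, Step.hlen, List.map_cons, List.sum_cons, List.map_nil, List.sum_nil,
      IH]
    ring
lemma Mon.enc_hlen {d : ℕ} (ℓ : ℕ) (v : Mon d) :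
    (v.enc.map (Step.hlen ℓ)).sum = ℓ * v.deg + 2 * (∑ i, v.mult i) := by
  cases v with
  | single a => exact a.enc_hlen ℓ
  | cons a w =>
    simp only [Mon.enc, List.map_append, List.sum_append, Atom.enc_hlen ℓ a,
      Mon.enc_hlen ℓ w, Mon.deg, Mon.mult, Finset.sum_add_distrib]
    ring
end

mutual
lemma Atom.enc_rise {d : ℕ} (a : Atom d) : (a.enc.map Step.rise).sum = 0 := by
  cases a with
  | star => simp [Atom.enc, Step.rise]
  | op i v =>
    simp [Atom.enc, Step.rise, Mon.enc_rise v]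
lemma Mon.enc_rise {d : ℕ} (v : Mon d) : (v.enc.map Step.rise).sum = 0 := by
  cases v with
  | single a => exact a.enc_rise
  | cons a w => simp [Mon.enc, Atom.enc_rise a, Mon.enc_rise w]
end

mutual
lemma Atom.enc_pref {d : ℕ} (a : Atom d) :
    ∀ q : List (Step d), q <+: a.enc → 0 ≤ (q.map Step.rise).sum := by
  intro q hq
  cases a with
  | star =>
    rcases prefix_cons_cases hq with rfl | ⟨q', rfl, hq'⟩
    · simp
    · rw [List.prefix_nil] at hq'
      subst hq'
      simp [Step.rise]
  | op i v =>
    rcases prefix_cons_cases hq with rfl | ⟨q', rfl, hq'⟩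
    · simp
    rcases prefix_append_cases hq' with h | ⟨t, rfl, ht⟩
    · have := Mon.enc_pref v q' h
      simp only [List.map_cons, List.sum_cons, Step.rise]
      omega
    · rcases prefix_cons_cases ht with rfl | ⟨t', rfl, ht'⟩
      · simp only [List.map_cons, List.map_append, List.sum_cons, List.sum_append,
          Mon.enc_rise v, Step.rise]
        simp
      · rw [List.prefix_nil] at ht'
        subst ht'
        simp [Step.rise, Mon.enc_rise v]
lemma Mon.enc_pref {d : ℕ} (v : Mon d) :
    ∀ q : List (Step d), q <+: v.enc → 0 ≤ (q.map Step.rise).sum := by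
  intro q hq
  cases v with
  | single a => exact a.enc_pref q hq
  | cons a w =>
    rcases prefix_append_cases hq with h | ⟨t, rfl, ht⟩
    · exact a.enc_pref q h
    · have := Mon.enc_pref w t ht
      simp only [List.map_append, List.sum_append, Atom.enc_rise a]
      omega
end

mutual
lemma Atom.enc_chain {d : ℕ} (a : Atom d) :
    a.enc.Chain' (fun x y => (∃ i, x = Step.up i) → y ≠ Step.down) := by
  cases a with
  | star => simp [Atom.enc, List.Chain']
  | op i v =>
    rw [Atom.enc]; simp only [List.Chain']; rw [List.isChain_cons]
    constructor
    · intro y hy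
      obtain ⟨x, t, hx, hne⟩ := v.enc_head
      rw [hx] at hy
      simp at hy
      subst hy
      exact fun _ => hne
    · rw [List.isChain_append]
      refine ⟨Mon.enc_chain v, by simp, ?_⟩
      intro x hx y hy
      intro ⟨j, hj⟩
      subst hj
      exact absurd hx (v.enc_lastNotUp j)
lemma Mon.enc_chain {d : ℕ} (v : Mon d) :
    v.enc.Chain' (fun x y => (∃ i, x = Step.up i) → y ≠ Step.down) := by
  cases v with
  | single a => exact a.enc_chain
  | cons a w =>
    rw [Mon.enc]; simp only [List.Chain']; rw [List.isChain_append]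
    refine ⟨a.enc_chain, Mon.enc_chain w, ?_⟩
    intro x hx y hy
    intro ⟨j, hj⟩
    subst hj
    exact absurd hx (a.enc_lastNotUp j)
end

/-! ### Injectivity of the encoding -/

mutual
lemma Atom.enc_inj {d : ℕ} : ∀ (a a' : Atom d) (l l' : List (Step d)),
    a.enc ++ l = a'.enc ++ l' → a = a' ∧ l = l' := by
  intro a a' l l' h
  cases a with
  | star =>
    cases a' with
    | star => simpa [Atom.enc] using h
    | op i v => simp [Atom.enc] at h
  | op i v =>
    cases a' with
    | star => simp [Atom.enc] at h
    | op i' v' =>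
      simp only [Atom.enc, List.cons_append, List.append_assoc, List.singleton_append,
        List.cons.injEq, Step.up.injEq] at h
      obtain ⟨rfl, h2⟩ := h
      obtain ⟨rfl, rfl⟩ := Mon.enc_inj v v' l l' h2
      exact ⟨rfl, rfl⟩
lemma Mon.enc_inj {d : ℕ} : ∀ (v v' : Mon d) (l l' : List (Step d)),
    v.enc ++ (Step.down :: l) = v'.enc ++ (Step.down :: l') → v = v' ∧ l = l' := by
  intro v v' l l' h
  cases v with
  | single a =>
    cases v' with
    | single a' =>
      obtain ⟨rfl, h2⟩ := Atom.enc_inj a a' _ _ h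
      simp at h2
      exact ⟨rfl, h2⟩
    | cons a' w' =>
      rw [Mon.enc, Mon.enc, List.append_assoc] at h
      obtain ⟨rfl, h2⟩ := Atom.enc_inj a a' _ _ h
      obtain ⟨x, t, hx, hne⟩ := w'.enc_head
      rw [hx] at h2
      simp at h2
      exact absurd h2.1.symm hne
  | cons a w =>
    cases v' with
    | single a' =>
      rw [Mon.enc, Mon.enc, List.append_assoc] at h
      obtain ⟨rfl, h2⟩ := Atom.enc_inj a a' _ _ h
      obtain ⟨x, t, hx, hne⟩ := w.enc_head
      rw [hx] at h2
      simp at h2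
      exact absurd h2.1 hne
    | cons a' w' =>
      rw [Mon.enc, Mon.enc, List.append_assoc, List.append_assoc] at h
      obtain ⟨rfl, h2⟩ := Atom.enc_inj a a' _ _ h
      obtain ⟨rfl, rfl⟩ := Mon.enc_inj w w' l l' h2
      exact ⟨rfl, rfl⟩
end

lemma Mon.enc_injective {d : ℕ} : Function.Injective (Mon.enc (d := d)) := by
  intro v w h
  have h2 : v.enc ++ (Step.down :: []) = w.enc ++ (Step.down :: []) := by rw [h]
  exact (Mon.enc_inj v w [] [] h2).1

/-! ### Parsing: surjectivity of the encoding -/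

lemma firstDrop {d : ℕ} : ∀ (n : ℕ) (q : List (Step d)), q.length ≤ n →
    (q.map Step.rise).sum < 0 →
    ∃ a b, q = a ++ Step.down :: b ∧ ((a.map Step.rise).sum = 0) ∧
      ∀ r, r <+: a → 0 ≤ (r.map Step.rise).sum := by
  intro n
  induction n with
  | zero =>
    intro q hq hneg
    rw [Nat.le_zero, List.length_eq_zero_iff] at hq
    subst hq; simp at hneg
  | succ n IH =>
    intro q hq hneg
    cases q with
    | nil => simp at hneg
    | cons x q' =>
      cases x with
      | down =>
        exact ⟨[], q', rfl, by simp, by intro r hr; rw [List.prefix_nil] at hr; simp [hr]⟩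
      | flat =>
        have hlen : q'.length ≤ n := by simpa using hq
        have hneg' : (q'.map Step.rise).sum < 0 := by
          simpa [Step.rise] using hneg
        obtain ⟨a', b', rfl, ha', hpr⟩ := IH q' hlen hneg'
        refine ⟨Step.flat :: a', b', rfl, by simpa [Step.rise] using ha', ?_⟩
        intro r hr
        rcases prefix_cons_cases hr with rfl | ⟨r', rfl, hr'⟩
        · simp
        · simpa [Step.rise] using hpr r' hr'
      | up i =>
        have hlen : q'.length ≤ n := by simpa using hq
        have hneg' : (q'.map Step.rise).sum < -1 := by
          have : (1 : ℤ) + (q'.map Step.rise).sum < 0 := by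
            simpa [Step.rise] using hneg
          omega
        obtain ⟨a', b', rfl, ha', hpr⟩ := IH q' hlen (by omega)
        have hb'neg : (b'.map Step.rise).sum < 0 := by
          simp only [List.map_append, List.sum_append, List.map_cons, List.sum_cons,
            ha', Step.rise] at hneg'
          omega
        have hb'len : b'.length ≤ n := by
          have h1 : (a' ++ Step.down :: b').length = a'.length + (b'.length + 1) := by simp
          omega
        obtain ⟨a'', b'', rfl, ha'', hpr''⟩ := IH b' hb'len hb'neg
        refine ⟨Step.up i :: a' ++ Step.down :: a'', b'', by simp, ?_, ?_⟩
        · simp [Step.rise, ha', ha'']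
        · intro r hr
          rcases prefix_cons_cases hr with rfl | ⟨r', rfl, hr'⟩
          · simp
          simp only [List.map_cons, List.sum_cons, Step.rise]
          rcases prefix_append_cases hr' with h | ⟨t, rfl, ht⟩
          · have := hpr r' h; omega
          rcases prefix_cons_cases ht with rfl | ⟨t', rfl, ht'⟩
          · simp [ha']
          · have := hpr'' t' ht'
            simp only [List.map_append, List.sum_append, List.map_cons, List.sum_cons,
              ha', Step.rise]
            omega

lemma parse {d : ℕ} : ∀ (n : ℕ) (p : List (Step d)), p.length ≤ n → p ≠ [] →
    (p.map Step.rise).sum = 0 →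
    (∀ q : List (Step d), q <+: p → 0 ≤ (q.map Step.rise).sum) →
    p.Chain' (fun x y => (∃ i, x = Step.up i) → y ≠ Step.down) →
    ∃ v : Mon d, v.enc = p := by
  intro n
  induction n with
  | zero =>
    intro p hp hne _ _ _
    rw [Nat.le_zero, List.length_eq_zero_iff] at hp
    exact absurd hp hne
  | succ n IH =>
    intro p hp hne hsum hpref hchain
    cases p with
    | nil => exact absurd rfl hne
    | cons x p' =>
      cases x with
      | down =>
        have := hpref [Step.down] ⟨p', rfl⟩
        simp [Step.rise] at this
      | flat =>
        rcases eq_or_ne p' [] with rfl | hp'ne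
        · exact ⟨Mon.single Atom.star, rfl⟩
        have hsum' : (p'.map Step.rise).sum = 0 := by simpa [Step.rise] using hsum
        have hpref' : ∀ q : List (Step d), q <+: p' → 0 ≤ (q.map Step.rise).sum := by
          intro q hq
          have := hpref (Step.flat :: q) (List.cons_prefix_cons.mpr ⟨rfl, hq⟩)
          simpa [Step.rise] using this
        have hlen' : p'.length ≤ n := by simpa using hp
        obtain ⟨w, hw⟩ := IH p' hlen' hp'ne hsum' hpref' hchain.tail
        exact ⟨Mon.cons Atom.star w, by simp [Mon.enc, Atom.enc, hw]⟩
      | up i =>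
        have hneg : (p'.map Step.rise).sum < 0 := by
          have : (1 : ℤ) + (p'.map Step.rise).sum = 0 := by simpa [Step.rise] using hsum
          omega
        have hlen' : p'.length ≤ n := by simpa using hp
        obtain ⟨a, c, rfl, ha, hpr⟩ := firstDrop n p' hlen' hneg
        -- a is nonempty because of the no-peak condition
        have hane : a ≠ [] := by
          rintro rfl
          simp only [List.Chain'] at hchain; rw [List.nil_append, List.isChain_cons_cons] at hchain
          exact hchain.1 ⟨i, rfl⟩ rfl
        -- parse the inner monomial
        have halen : a.length ≤ n := by
          have h1 : (a ++ Step.down :: c).length = a.length + (c.length + 1) := by simp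
          omega
        have hachain : a.Chain' (fun x y => (∃ i, x = Step.up i) → y ≠ Step.down) := by
          refine hchain.infix ?_
          exact ⟨[Step.up i], Step.down :: c, by simp⟩
        obtain ⟨w, hw⟩ := IH a halen hane ha hpr hachain
        rcases eq_or_ne c [] with rfl | hcne
        · exact ⟨Mon.single (Atom.op i w), by simp [Mon.enc, Atom.enc, hw]⟩
        · have hcsum : (c.map Step.rise).sum = 0 := by
            simp only [List.map_cons, List.map_append, List.sum_cons, List.sum_append,
              ha, Step.rise] at hsum
            omega
          have hcpref : ∀ q : List (Step d), q <+: c → 0 ≤ (q.map Step.rise).sum := by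
            intro q hq
            have h2 : (Step.up i :: a ++ Step.down :: q) <+: (Step.up i :: a ++ Step.down :: c) := by
              refine List.cons_prefix_cons.mpr ⟨rfl, ?_⟩
              exact (List.prefix_append_right_inj a).mpr (List.cons_prefix_cons.mpr ⟨rfl, hq⟩)
            have := hpref _ h2
            simp only [List.map_cons, List.map_append, List.sum_cons, List.sum_append,
              ha, Step.rise] at this
            omega
          have hcchain : c.Chain' (fun x y => (∃ i, x = Step.up i) → y ≠ Step.down) := by
            refine hchain.suffix ?_
            exact ⟨Step.up i :: a ++ [Step.down], by simp⟩
          have hclen : c.length ≤ n := by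
            have h1 : (a ++ Step.down :: c).length = a.length + (c.length + 1) := by simp
            omega
          obtain ⟨w', hw'⟩ := IH c hclen hcne hcsum hcpref hcchain
          exact ⟨Mon.cons (Atom.op i w) w', by simp [Mon.enc, Atom.enc, hw, hw']⟩

/-- `b_{d,ℓ}(n)` counts lattice paths of total horizontal length `n` from the origin to
the x-axis, with steps `Uᵢ = (1,1)` (`1 ≤ i ≤ d`), `D = (1,−1)`, `H = (ℓ,0)`, staying
weakly above the x-axis and avoiding peaks `UD`. -/
theorem b_eq_card_paths (d ℓ n : ℕ) (hd : 1 ≤ d) (hl : 1 ≤ ℓ) (hn : 1 ≤ n) :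
    b d ℓ n = Nat.card {p : List (Step d) // IsGoodPath d ℓ n p} := by
  rw [b]
  refine Nat.card_congr (Equiv.ofBijective
    (fun v => ⟨v.1.enc, (Mon.enc_hlen ℓ v.1).trans v.2, Mon.enc_rise v.1,
      Mon.enc_pref v.1, Mon.enc_chain v.1⟩) ⟨?_, ?_⟩)
  · intro v w h
    exact Subtype.ext (Mon.enc_injective (congrArg Subtype.val h))
  · rintro ⟨p, h1, h2, h3, h4⟩
    have hne : p ≠ [] := by
      rintro rfl
      simp at h1
      omega
    obtain ⟨v, hv⟩ := parse p.length p le_rfl hne h2 h3 h4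
    refine ⟨⟨v, ?_⟩, Subtype.ext hv⟩
    rw [← Mon.enc_hlen ℓ v, hv]
    exact h1

end MultiOp
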